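/- arXiv:2005.09839 — 3 statements merged into one kernel-verified Lean document; each statement's English description precedes it below -/
import Mathlib

section
/- Fix r, λ > 0 and v ∈ [0,1). Viewing B as a real variable with B ≥ 1, the function f(B) = (Bλ − (B−1)rv)/(r + Bλ) is strictly increasing in B if v < λ/(r+λ), constant in B if v = λ/(r+λ), and strictly decreasing in B if v > λ/(r+λ). -/
open Set

/-! The ratio is a Möbius function of `B`: `f(B) = ((l - r v) B + r v) / (r + l B)`, so
`f(b) - f(a) = (b - a) · r (l - v (r + l)) / ((r + a l)(r + b l))`, and on `B ≥ 1` both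
denominators are positive. The sign of `l - v (r + l)` therefore decides the monotonicity. -/

noncomputable def benchmarkRatio (r l v B : ℝ) : ℝ :=
  (B * l - (B - 1) * r * v) / (r + B * l)

section

variable {r l v : ℝ}

lemma benchmarkRatio_sub_benchmarkRatio {a b : ℝ} (ha : r + a * l ≠ 0) (hb : r + b * l ≠ 0) :
    benchmarkRatio r l v b - benchmarkRatio r l v a
      = (b - a) * (r * (l - v * (r + l))) / ((r + a * l) * (r + b * l)) := by
  unfold benchmarkRatio
  rw [div_sub_div _ _ hb ha]
  congr 1 <;> ring

lemma add_mul_pos_of_one_le (hr : 0 < r) (hl : 0 ≤ l) {B : ℝ} (hB : B ∈ Ici (1 : ℝ)) :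
    0 < r + B * l := by
  have : l ≤ B * l := le_mul_of_one_le_left hl hB
  linarith

lemma strictMonoOn_benchmarkRatio (hr : 0 < r) (hl : 0 ≤ l) (hv : v * (r + l) < l) :
    StrictMonoOn (benchmarkRatio r l v) (Ici 1) := by
  intro a ha b hb hab
  have hda := add_mul_pos_of_one_le hr hl ha
  have hdb := add_mul_pos_of_one_le hr hl hb
  have hdiff := benchmarkRatio_sub_benchmarkRatio (v := v) hda.ne' hdb.ne'
  have hslope : 0 < r * (l - v * (r + l)) := mul_pos hr (sub_pos.2 hv)
  refine sub_pos.1 ?_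
  rw [hdiff]
  exact div_pos (mul_pos (sub_pos.2 hab) hslope) (mul_pos hda hdb)

lemma strictAntiOn_benchmarkRatio (hr : 0 < r) (hl : 0 ≤ l) (hv : l < v * (r + l)) :
    StrictAntiOn (benchmarkRatio r l v) (Ici 1) := by
  intro a ha b hb hab
  have hda := add_mul_pos_of_one_le hr hl ha
  have hdb := add_mul_pos_of_one_le hr hl hb
  have hdiff := benchmarkRatio_sub_benchmarkRatio (v := v) hda.ne' hdb.ne'
  have hslope : r * (l - v * (r + l)) < 0 := mul_neg_of_pos_of_neg hr (sub_neg.2 hv)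
  refine sub_neg.1 ?_
  rw [hdiff]
  exact div_neg_of_neg_of_pos (mul_neg_of_pos_of_neg (sub_pos.2 hab) hslope) (mul_pos hda hdb)

lemma benchmarkRatio_eq_benchmarkRatio (hv : v * (r + l) = l) {a b : ℝ}
    (ha : r + a * l ≠ 0) (hb : r + b * l ≠ 0) :
    benchmarkRatio r l v a = benchmarkRatio r l v b := by
  have hdiff := benchmarkRatio_sub_benchmarkRatio (v := v) ha hb
  rw [hv, sub_self, mul_zero, mul_zero, zero_div, sub_eq_zero] at hdiff
  exact hdiff.symm

end

theorem benchmark_ratio_monotonicity_in_B_general (r l v : ℝ)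
    (hr : 0 < r) (hl : 0 < l) :
    (v < l / (r + l) →
      StrictMonoOn (fun B : ℝ => (B * l - (B - 1) * r * v) / (r + B * l)) (Set.Ici 1)) ∧
    (v = l / (r + l) →
      ∀ B ∈ Set.Ici (1:ℝ), ∀ B' ∈ Set.Ici (1:ℝ),
        (B * l - (B - 1) * r * v) / (r + B * l)
          = (B' * l - (B' - 1) * r * v) / (r + B' * l)) ∧
    (v > l / (r + l) →
      StrictAntiOn (fun B : ℝ => (B * l - (B - 1) * r * v) / (r + B * l)) (Set.Ici 1)) := by
  have hrl : 0 < r + l := by linarith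
  refine ⟨fun hv => ?_, fun hv B hB B' hB' => ?_, fun hv => ?_⟩
  · exact strictMonoOn_benchmarkRatio hr hl.le ((lt_div_iff₀ hrl).1 hv)
  · exact benchmarkRatio_eq_benchmarkRatio ((eq_div_iff hrl.ne').1 hv)
      (add_mul_pos_of_one_le hr hl.le hB).ne' (add_mul_pos_of_one_le hr hl.le hB').ne'
  · exact strictAntiOn_benchmarkRatio hr hl.le ((div_lt_iff₀ hrl).1 hv)

/-- Viewing `B` as a real variable with `B ≥ 1`, the function
`f(B) = (Bl − (B−1)rv)/(r + Bl)` is strictly increasing in `B` if `v < l/(r+l)`,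
constant in `B` if `v = l/(r+l)`, and strictly decreasing in `B` if `v > l/(r+l)`. -/
theorem benchmark_ratio_monotonicity_in_B (r l v : ℝ)
    (hr : 0 < r) (hl : 0 < l) (hv : v ∈ Set.Ico (0:ℝ) 1) :
    (v < l / (r + l) →
      StrictMonoOn (fun B : ℝ => (B * l - (B - 1) * r * v) / (r + B * l)) (Set.Ici 1)) ∧
    (v = l / (r + l) →
      ∀ B ∈ Set.Ici (1:ℝ), ∀ B' ∈ Set.Ici (1:ℝ),
        (B * l - (B - 1) * r * v) / (r + B * l)
          = (B' * l - (B' - 1) * r * v) / (r + B' * l)) ∧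
    (v > l / (r + l) →
      StrictAntiOn (fun B : ℝ => (B * l - (B - 1) * r * v) / (r + B * l)) (Set.Ici 1)) :=
  benchmark_ratio_monotonicity_in_B_general r l v hr hl
end

section
/- In the diffusion process of the previous context, for any initial state K⁰ = (K_b⁰, K_s⁰) with s ∈ K_s⁰, any buyer j ∉ K_b⁰, any link sequence ξ, and any step z: the buyer component satisfies κ_b^z((K_b⁰ ∪ {j}, K_s⁰), ξ) \ κ_b^z((K_b⁰, K_s⁰), ξ) ⊆ κ_b^z(({j}, {s}), ξ) \ κ_b^z((∅, {s}), ξ). -/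
variable {P : Type*}

/-- One step of the information-diffusion process about guilty seller `s`. -/
def diffuseStep (Buyers Sellers : Set P) (s : P) (l : P × P)
    (K : Set P × Set P) : Set P × Set P :=
  (K.1 ∪ {b | b ∈ Buyers ∧ b ∉ K.1 ∧
      ((l.1 = b ∧ l.2 ∈ K.1 ∪ K.2) ∨ (l.2 = b ∧ l.1 ∈ K.1 ∪ K.2))},
   K.2 ∪ {t | t ∈ Sellers ∧ t ≠ s ∧ t ∉ K.2 ∧
      ((l.1 = t ∧ l.2 ∈ (K.1 ∪ K.2) \ {s}) ∨ (l.2 = t ∧ l.1 ∈ (K.1 ∪ K.2) \ {s}))})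

/-- The state of informed players after the first `z` link recognitions of `ξ`. -/
def kappa (Buyers Sellers : Set P) (s : P) (ξ : ℕ → P × P) :
    ℕ → Set P × Set P → Set P × Set P
  | 0, K => K
  | z + 1, K => diffuseStep Buyers Sellers s (ξ (z + 1))
      (kappa Buyers Sellers s ξ z K)

/-!
Run the diffusion from `A = (Kb0 ∪ {j}, Ks0)`, `B = (Kb0, Ks0)`, `C = ({j}, {s})` and
`D = (∅, {s})`. The componentwise invariant `κ^z A \ κ^z B ≤ κ^z C` holds at `z = 0` and
survives every step: a player newly informed from `A` but not from `B` was informed by a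
partner informed from `A` but not from `B`, hence informed from `C`. Since `D ≤ B` and
diffusion is monotone, `κ^z D ≤ κ^z B` is disjoint from `κ^z A \ κ^z B`.
-/

def LinksTo (l : P × P) (x : P) (T : Set P) : Prop :=
  l.1 = x ∧ l.2 ∈ T ∨ l.2 = x ∧ l.1 ∈ T

namespace LinksTo

variable {l : P × P} {x : P} {T U : Set P}

theorem mono (h : LinksTo l x T) (hTU : T ⊆ U) : LinksTo l x U :=
  h.imp (And.imp_right (@hTU _)) (And.imp_right (@hTU _))

theorem sdiff (hT : LinksTo l x T) (hU : ¬LinksTo l x U) : LinksTo l x (T \ U) := by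
  rcases hT with ⟨rfl, hT⟩ | ⟨rfl, hT⟩
  · exact Or.inl ⟨rfl, hT, fun hU' => hU (Or.inl ⟨rfl, hU'⟩)⟩
  · exact Or.inr ⟨rfl, hT, fun hU' => hU (Or.inr ⟨rfl, hU'⟩)⟩

end LinksTo

section diffuseStep

variable {Bu Se : Set P} {s : P} {l : P × P} {K : Set P × Set P} {x : P}

theorem mem_diffuseStep_fst :
    x ∈ (diffuseStep Bu Se s l K).1 ↔ x ∈ K.1 ∨ x ∈ Bu ∧ LinksTo l x (K.1 ∪ K.2) := by
  simp only [diffuseStep, LinksTo, Set.mem_union, Set.mem_ofPred_eq]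
  tauto

theorem mem_diffuseStep_snd :
    x ∈ (diffuseStep Bu Se s l K).2 ↔
      x ∈ K.2 ∨ x ∈ Se ∧ x ≠ s ∧ LinksTo l x ((K.1 ∪ K.2) \ {s}) := by
  simp only [diffuseStep, LinksTo, Set.mem_union, Set.mem_ofPred_eq]
  tauto

variable (Bu Se s l)

theorem diffuseStep_monotone : Monotone (diffuseStep Bu Se s l) := by
  intro K K' hK
  have hinformed : K.1 ∪ K.2 ⊆ K'.1 ∪ K'.2 := Set.union_subset_union hK.1 hK.2
  refine ⟨fun x hx => ?_, fun x hx => ?_⟩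
  · rw [mem_diffuseStep_fst] at hx ⊢
    exact hx.imp (@hK.1 _) (And.imp_right (·.mono hinformed))
  · rw [mem_diffuseStep_snd] at hx ⊢
    exact hx.imp (@hK.2 _)
      (And.imp_right (And.imp_right (·.mono (Set.sdiff_subset_sdiff_left hinformed))))

theorem diffuseStep_sdiff_le {A B C : Set P × Set P} (h : A \ B ≤ C) :
    diffuseStep Bu Se s l A \ diffuseStep Bu Se s l B ≤ diffuseStep Bu Se s l C := by
  have hinformed : (A.1 ∪ A.2) \ (B.1 ∪ B.2) ⊆ C.1 ∪ C.2 := by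
    rintro y ⟨hyA | hyA, hyB⟩
    · exact Or.inl (h.1 ⟨hyA, fun hyB' => hyB (Or.inl hyB')⟩)
    · exact Or.inr (h.2 ⟨hyA, fun hyB' => hyB (Or.inr hyB')⟩)
  refine ⟨fun x ⟨hxA, hxB⟩ => ?_, fun x ⟨hxA, hxB⟩ => ?_⟩
  · rw [mem_diffuseStep_fst] at hxA hxB ⊢
    rw [not_or, not_and] at hxB
    rcases hxA with hxA | ⟨hxBu, hlink⟩
    · exact Or.inl (h.1 ⟨hxA, hxB.1⟩)
    · exact Or.inr ⟨hxBu, (hlink.sdiff (hxB.2 hxBu)).mono hinformed⟩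
  · rw [mem_diffuseStep_snd] at hxA hxB ⊢
    rw [not_or, not_and, not_and] at hxB
    rcases hxA with hxA | ⟨hxSe, hxs, hlink⟩
    · exact Or.inl (h.2 ⟨hxA, hxB.1⟩)
    · refine Or.inr ⟨hxSe, hxs, (hlink.sdiff (hxB.2 hxSe hxs)).mono ?_⟩
      rintro y ⟨⟨hyA, hys⟩, hyB⟩
      exact ⟨hinformed ⟨hyA, fun hyB' => hyB ⟨hyB', hys⟩⟩, hys⟩

end diffuseStep

section kappa

variable (Bu Se : Set P) (s : P) (ξ : ℕ → P × P)

theorem kappa_monotone (z : ℕ) : Monotone (kappa Bu Se s ξ z) := by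
  induction z with
  | zero => exact monotone_id
  | succ z ih => exact (diffuseStep_monotone Bu Se s (ξ (z + 1))).comp ih

theorem kappa_sdiff_le {A B C : Set P × Set P} (h : A \ B ≤ C) (z : ℕ) :
    kappa Bu Se s ξ z A \ kappa Bu Se s ξ z B ≤ kappa Bu Se s ξ z C := by
  induction z with
  | zero => exact h
  | succ z ih => exact diffuseStep_sdiff_le Bu Se s (ξ (z + 1)) ih

end kappa

theorem kappa_marginal_effect_general (Buyers Sellers : Set P) (s : P) (ξ : ℕ → P × P)
    (Kb0 Ks0 : Set P) (hsK : s ∈ Ks0) (j : P) :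
    ∀ z : ℕ,
      (kappa Buyers Sellers s ξ z (Kb0 ∪ {j}, Ks0)).1 \
        (kappa Buyers Sellers s ξ z (Kb0, Ks0)).1 ⊆
      (kappa Buyers Sellers s ξ z ({j}, {s})).1 \
        (kappa Buyers Sellers s ξ z (∅, {s})).1 := by
  intro z
  have hextra := kappa_sdiff_le Buyers Sellers s ξ
    (A := (Kb0 ∪ {j}, Ks0)) (B := (Kb0, Ks0)) (C := ({j}, {s}))
    ⟨Set.union_sdiff_left.trans_subset Set.sdiff_subset, by simp⟩ z
  have hbase := kappa_monotone Buyers Sellers s ξ z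
    (show ((∅, {s}) : Set P × Set P) ≤ (Kb0, Ks0) from
      ⟨Set.empty_subset _, Set.singleton_subset_iff.2 hsK⟩)
  exact Set.subset_sdiff.2 ⟨hextra.1, Set.disjoint_sdiff_left.mono_right hbase.1⟩

/-- The marginal effect of one extra initially informed buyer `j` on the set of
informed buyers is largest when no one else is initially informed (Ellison's
Lemma 1 adaptation). -/
theorem kappa_marginal_effect [Fintype P] (Buyers Sellers : Set P)
    (hdisj : Disjoint Buyers Sellers) (hcover : Buyers ∪ Sellers = Set.univ)
    (s : P) (hs : s ∈ Sellers) (ξ : ℕ → P × P)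
    (Kb0 Ks0 : Set P) (hKb : Kb0 ⊆ Buyers) (hKs : Ks0 ⊆ Sellers) (hsK : s ∈ Ks0)
    (j : P) (hj : j ∈ Buyers) (hjK : j ∉ Kb0) :
    ∀ z : ℕ,
      (kappa Buyers Sellers s ξ z (Kb0 ∪ {j}, Ks0)).1 \
        (kappa Buyers Sellers s ξ z (Kb0, Ks0)).1 ⊆
      (kappa Buyers Sellers s ξ z ({j}, {s})).1 \
        (kappa Buyers Sellers s ξ z (∅, {s})).1 :=
  kappa_marginal_effect_general Buyers Sellers s ξ Kb0 Ks0 hsK j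
end

section
/- In the recursive system of the previous context, V is monotone: V(k_b+1, k_s) ≤ V(k_b, k_s) for all admissible k_b, k_s, i.e., the guilty seller's continuation value is nonincreasing in the number of buyers who deem her guilty. -/
/-- Total rate of informative events when `kb` buyers and `ks` sellers are informed. -/
def totalRate (B S : ℕ) (lBS lBB lSS : ℝ) (kb ks : ℕ) : ℝ :=
  lBB * kb * ((B : ℝ) - kb) + lSS * ((ks : ℝ) - 1) * ((S : ℝ) - ks)
    + lBS * kb * ((S : ℝ) - ks) + lBS * ks * ((B : ℝ) - kb)

/-- `V` satisfies the recursive system of the guilty seller's continuation values. -/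
def SatisfiesSystem (B S : ℕ) (r lBS lBB lSS : ℝ) (V : ℕ → ℕ → ℝ) : Prop :=
  (∀ ks : ℕ, V B ks = 0) ∧
  ∀ kb ks : ℕ, 1 ≤ kb → kb ≤ B - 1 → 1 ≤ ks → ks ≤ S →
    V kb ks = (lBB * kb * ((B : ℝ) - kb) * V (kb + 1) ks
        + lSS * ((ks : ℝ) - 1) * ((S : ℝ) - ks) * V kb (ks + 1)
        + lBS * kb * ((S : ℝ) - ks) * V kb (ks + 1)
        + lBS * ks * ((B : ℝ) - kb) * V (kb + 1) ks
        + lBS * ((B : ℝ) - kb))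
      / (r + totalRate B S lBS lBB lSS kb ks)

/- Monotonicity is proved jointly in both coordinates by backward induction on the grid.
Subtracting the cleared recursions at two neighbouring states leaves `r + Λ` times the
difference equal to a nonnegative combination of differences at later states plus `λ_BS`;
the cheating-opportunity term `λ_BS (B - k_b)` drops by exactly `λ_BS` per informed buyer. -/

theorem Nat.decreasing_induction_box {m n : ℕ} {P : ℕ → ℕ → Prop}
    (step : ∀ i j, i ≤ m → j ≤ n →
      (i < m → P (i + 1) j) → (j < n → P i (j + 1)) → P i j) :
    ∀ i j, i ≤ m → j ≤ n → P i j := by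
  suffices ∀ k i j, m - i + (n - j) ≤ k → i ≤ m → j ≤ n → P i j from
    fun i j => this _ i j le_rfl
  intro k
  induction k with
  | zero =>
    intro i j hk hi hj
    exact step i j hi hj (fun h => absurd h (by omega)) (fun h => absurd h (by omega))
  | succ k ih =>
    intro i j hk hi hj
    exact step i j hi hj (fun h => ih _ _ (by omega) h hj) (fun h => ih _ _ (by omega) hi h)

/-- `d` need only be controlled where `m - n ≠ 0`: at the edge of the grid it involves values
of `V` outside the recursion. -/
lemma mul_natCast_sub_mul_nonneg {c d : ℝ} {m n : ℕ} (hc : 0 ≤ c) (hnm : n ≤ m)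
    (hd : n < m → 0 ≤ d) : 0 ≤ c * ((m : ℝ) - n) * d := by
  rcases hnm.lt_or_eq with hlt | rfl
  · have : (n : ℝ) < m := by exact_mod_cast hlt
    exact mul_nonneg (mul_nonneg hc (by linarith)) (hd hlt)
  · simp

def buyerRate (B : ℕ) (lBS lBB : ℝ) (kb ks : ℕ) : ℝ :=
  (lBB * kb + lBS * ks) * ((B : ℝ) - kb)

def sellerRate (S : ℕ) (lBS lSS : ℝ) (kb ks : ℕ) : ℝ :=
  (lSS * ((ks : ℝ) - 1) + lBS * kb) * ((S : ℝ) - ks)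

section Rates

variable {B S : ℕ} {lBS lBB lSS : ℝ} {kb ks : ℕ}

lemma totalRate_eq_buyerRate_add_sellerRate :
    totalRate B S lBS lBB lSS kb ks = buyerRate B lBS lBB kb ks + sellerRate S lBS lSS kb ks := by
  unfold totalRate buyerRate sellerRate
  ring

lemma buyerRate_mul_nonneg {d : ℝ} (hBS : 0 ≤ lBS) (hBB : 0 ≤ lBB) (hkb : kb ≤ B)
    (hd : kb < B → 0 ≤ d) : 0 ≤ buyerRate B lBS lBB kb ks * d :=
  mul_natCast_sub_mul_nonneg (by positivity) hkb hd

lemma sellerRate_mul_nonneg {d : ℝ} (hBS : 0 ≤ lBS) (hSS : 0 ≤ lSS) (hks1 : 1 ≤ ks)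
    (hks : ks ≤ S) (hd : ks < S → 0 ≤ d) : 0 ≤ sellerRate S lBS lSS kb ks * d := by
  have : (1 : ℝ) ≤ ks := by exact_mod_cast hks1
  exact mul_natCast_sub_mul_nonneg (add_nonneg (mul_nonneg hSS (by linarith)) (by positivity))
    hks hd

lemma add_totalRate_pos {r : ℝ} (hr : 0 < r) (hBS : 0 ≤ lBS) (hBB : 0 ≤ lBB) (hSS : 0 ≤ lSS)
    (hkb : kb ≤ B) (hks1 : 1 ≤ ks) (hks : ks ≤ S) :
    0 < r + totalRate B S lBS lBB lSS kb ks := by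
  have hb := buyerRate_mul_nonneg (ks := ks) (d := 1) hBS hBB hkb fun _ => zero_le_one
  have hs := sellerRate_mul_nonneg (kb := kb) (d := 1) hBS hSS hks1 hks fun _ => zero_le_one
  rw [totalRate_eq_buyerRate_add_sellerRate]
  rw [mul_one] at hb hs
  linarith

end Rates

namespace SatisfiesSystem

variable {B S : ℕ} {r lBS lBB lSS : ℝ} {V : ℕ → ℕ → ℝ}

/-- The recursion with the denominator cleared; it also holds at `kb = B`, where both sides
vanish. -/
lemma mul_eq (hV : SatisfiesSystem B S r lBS lBB lSS V) {kb ks : ℕ} (hkb1 : 1 ≤ kb)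
    (hkb : kb ≤ B) (hks1 : 1 ≤ ks) (hks : ks ≤ S)
    (hρ : 0 < r + totalRate B S lBS lBB lSS kb ks) :
    (r + totalRate B S lBS lBB lSS kb ks) * V kb ks =
      buyerRate B lBS lBB kb ks * V (kb + 1) ks + sellerRate S lBS lSS kb ks * V kb (ks + 1)
        + lBS * ((B : ℝ) - kb) := by
  rcases hkb.lt_or_eq with hlt | rfl
  · rw [hV.2 kb ks hkb1 (by omega) hks1 hks, mul_div_cancel₀ _ hρ.ne']
    unfold buyerRate sellerRate
    ring
  · simp [hV.1, buyerRate]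

lemma mul_sub_succ_fst (hV : SatisfiesSystem B S r lBS lBB lSS V) (hr : 0 < r)
    (hBS : 0 ≤ lBS) (hBB : 0 ≤ lBB) (hSS : 0 ≤ lSS) {kb ks : ℕ}
    (hkb1 : 1 ≤ kb) (hkb : kb < B)
    (hks1 : 1 ≤ ks) (hks : ks ≤ S) :
    (r + totalRate B S lBS lBB lSS kb ks) * (V kb ks - V (kb + 1) ks) =
      buyerRate B lBS lBB (kb + 1) ks * (V (kb + 1) ks - V (kb + 2) ks)
        + sellerRate S lBS lSS kb ks * (V kb (ks + 1) - V (kb + 1) (ks + 1))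
        + lBS * ((S : ℝ) - ks) * (V (kb + 1) ks - V (kb + 1) (ks + 1)) + lBS := by
  have e := hV.mul_eq hkb1 hkb.le hks1 hks (add_totalRate_pos hr hBS hBB hSS hkb.le hks1 hks)
  have e' := hV.mul_eq (kb := kb + 1) (by omega) hkb hks1 hks
    (add_totalRate_pos hr hBS hBB hSS hkb hks1 hks)
  unfold totalRate buyerRate sellerRate at *
  push_cast at *
  linear_combination e - e'

lemma mul_sub_succ_snd (hV : SatisfiesSystem B S r lBS lBB lSS V) (hr : 0 < r)
    (hBS : 0 ≤ lBS) (hBB : 0 ≤ lBB) (hSS : 0 ≤ lSS) {kb ks : ℕ}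
    (hkb1 : 1 ≤ kb) (hkb : kb ≤ B)
    (hks1 : 1 ≤ ks) (hks : ks < S) :
    (r + totalRate B S lBS lBB lSS kb ks) * (V kb ks - V kb (ks + 1)) =
      buyerRate B lBS lBB kb ks * (V (kb + 1) ks - V (kb + 1) (ks + 1))
        + sellerRate S lBS lSS kb (ks + 1) * (V kb (ks + 1) - V kb (ks + 2))
        + lBS * ((B : ℝ) - kb) * (V kb (ks + 1) - V (kb + 1) (ks + 1)) := by
  have e := hV.mul_eq hkb1 hkb hks1 hks.le (add_totalRate_pos hr hBS hBB hSS hkb hks1 hks.le)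
  have e' := hV.mul_eq (ks := ks + 1) hkb1 hkb (by omega) hks
    (add_totalRate_pos hr hBS hBB hSS hkb (by omega) hks)
  unfold totalRate buyerRate sellerRate at *
  push_cast at *
  linear_combination e - e'

theorem antitone (hV : SatisfiesSystem B S r lBS lBB lSS V) (hr : 0 < r)
    (hBS : 0 ≤ lBS) (hBB : 0 ≤ lBB) (hSS : 0 ≤ lSS) :
    ∀ kb ks, kb ≤ B → ks ≤ S → 1 ≤ kb → 1 ≤ ks →
      (kb < B → V (kb + 1) ks ≤ V kb ks) ∧ (ks < S → V kb (ks + 1) ≤ V kb ks) := by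
  refine Nat.decreasing_induction_box fun kb ks hkb hks ihb ihs hkb1 hks1 =>
    ⟨fun hlt => ?_, fun hlt => ?_⟩
  all_goals
    refine sub_nonneg.mp (nonneg_of_mul_nonneg_right ?_
      (add_totalRate_pos hr hBS hBB hSS hkb hks1 hks))
  · rw [hV.mul_sub_succ_fst hr hBS hBB hSS hkb1 hlt hks1 hks]
    have h₁ := buyerRate_mul_nonneg (ks := ks) hBS hBB hlt
      fun h => sub_nonneg.mpr ((ihb hlt (by omega) hks1).1 h)
    have h₂ := sellerRate_mul_nonneg (kb := kb) hBS hSS hks1 hks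
      fun h => sub_nonneg.mpr ((ihs h hkb1 (by omega)).1 hlt)
    have h₃ := mul_natCast_sub_mul_nonneg hBS hks
      fun h => sub_nonneg.mpr ((ihb hlt (by omega) hks1).2 h)
    linarith
  · rw [hV.mul_sub_succ_snd hr hBS hBB hSS hkb1 hkb hks1 hlt]
    have h₁ := buyerRate_mul_nonneg (ks := ks) hBS hBB hkb
      fun h => sub_nonneg.mpr ((ihb h (by omega) hks1).2 hlt)
    have h₂ := sellerRate_mul_nonneg (kb := kb) hBS hSS (by omega) hlt
      fun h => sub_nonneg.mpr ((ihs hlt hkb1 (by omega)).2 h)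
    have h₃ := mul_natCast_sub_mul_nonneg hBS hkb
      fun h => sub_nonneg.mpr ((ihs hlt hkb1 (by omega)).1 h)
    linarith

end SatisfiesSystem

theorem viscosity_monotone_in_informed_buyers_general (B S : ℕ)
    (r lBS lBB lSS : ℝ) (hr : 0 < r) (hBS : 0 < lBS) (hBB : 0 < lBB) (hSS : 0 < lSS)
    (V : ℕ → ℕ → ℝ) (hV : SatisfiesSystem B S r lBS lBB lSS V) :
    ∀ kb ks : ℕ, 1 ≤ kb → kb ≤ B - 1 → 1 ≤ ks → ks ≤ S →
      V (kb + 1) ks ≤ V kb ks := by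
  intro kb ks hkb1 hkb hks1 hks
  exact (hV.antitone hr hBS.le hBB.le hSS.le kb ks (by omega) hks hkb1 hks1).1 (by omega)

/-- The guilty seller's continuation value is nonincreasing in the number of buyers
who deem her guilty: `V(k_b+1, k_s) ≤ V(k_b, k_s)` on the admissible domain. -/
theorem viscosity_monotone_in_informed_buyers (B S : ℕ) (hB : 2 ≤ B) (hS : 1 ≤ S)
    (r lBS lBB lSS : ℝ) (hr : 0 < r) (hBS : 0 < lBS) (hBB : 0 < lBB) (hSS : 0 < lSS)
    (V : ℕ → ℕ → ℝ) (hV : SatisfiesSystem B S r lBS lBB lSS V) :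
    ∀ kb ks : ℕ, 1 ≤ kb → kb ≤ B - 1 → 1 ≤ ks → ks ≤ S →
      V (kb + 1) ks ≤ V kb ks :=
  viscosity_monotone_in_informed_buyers_general B S r lBS lBB lSS hr hBS hBB hSS V hV
end
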